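/- arXiv:0712.1648 — 3 statements merged into one kernel-verified Lean document; each statement's English description precedes it below -/
import Mathlib

section
/- Let P be a poset with two relations ≤ (causal) and < (chronological) satisfying: < implies ≤; generalized transitivity (x < y ≤ z implies x < z, and x ≤ y < z implies x < z). Suppose for every y the set I⁻(y) = {z | z < y} is nonempty and directed with supremum y. Then x ≪ y (x way-below y with respect to ≤) implies x ≤ s for some s < y, hence x < y. -/
def DirectedSetLe {P : Type*} [PartialOrder P] (S : Set P) : Prop :=
  S.Nonempty ∧ ∀ s ∈ S, ∀ s' ∈ S, ∃ t ∈ S, s ≤ t ∧ s' ≤ t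

def WayBelowD {P : Type*} [PartialOrder P] (x y : P) : Prop :=
  ∀ S : Set P, DirectedSetLe S → ∀ m : P, IsLUB S m → y ≤ m → ∃ s ∈ S, x ≤ s

/-- Abstract version of Lemma 1: in a causal spacetime, the way-below relation
implies the chronological relation. -/
theorem wayBelow_implies_chron {P : Type*} [PartialOrder P] (chron : P → P → Prop)
    (hsub : ∀ x y : P, chron x y → x ≤ y)
    (hgt1 : ∀ x y z : P, chron x y → y ≤ z → chron x z)
    (hgt2 : ∀ x y z : P, x ≤ y → chron y z → chron x z)
    (hdir : ∀ y : P, DirectedSetLe {z | chron z y} ∧ IsLUB {z | chron z y} y ∧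
      {z : P | chron z y}.Nonempty) :
    ∀ x y : P, WayBelowD x y → (∃ s, chron s y ∧ x ≤ s) ∧ chron x y := by
  intro x y hwb
  obtain ⟨hd, hlub, -⟩ := hdir y
  obtain ⟨s, hs, hxs⟩ := hwb _ hd y hlub le_rfl
  exact ⟨⟨s, hs, hxs⟩, hgt2 x s y hxs hs⟩
end

section
/- Let P be a poset with an auxiliary transitive relation < contained in ≤ satisfying generalized transitivity (x ≤ y < z implies x < z and x < y ≤ z implies x < z). Suppose P carries a topology such that for each x the set I⁺(x) = {z | x < z} is open, and suppose every directed set S with supremum ⊔S has the property that every open neighbourhood of ⊔S meets S. Then x < y implies x ≪ y (way below with respect to ≤). -/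
/-- Abstract version of Lemma 2: if chronological futures are open and every
neighbourhood of a directed supremum meets the directed set, then the
chronological relation implies the way-below relation. -/
theorem chron_implies_wayBelow {P : Type*} [PartialOrder P] [TopologicalSpace P]
    (chron : P → P → Prop)
    (htrans : Transitive chron)
    (hsub : ∀ x y : P, chron x y → x ≤ y)
    (hgt1 : ∀ x y z : P, chron x y → y ≤ z → chron x z)
    (hgt2 : ∀ x y z : P, x ≤ y → chron y z → chron x z)
    (hopen : ∀ x : P, IsOpen {z | chron x z})
    (hmeet : ∀ S : Set P, DirectedSetLe S → ∀ m : P, IsLUB S m →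
      ∀ U : Set P, IsOpen U → m ∈ U → (U ∩ S).Nonempty) :
    ∀ x y : P, chron x y → WayBelowD x y := by
  intro x y hxy S hS m hlub hym
  obtain ⟨s, hsU, hsS⟩ := hmeet S hS m hlub {z | chron x z} (hopen x)
    (hgt1 x y m hxy hym)
  exact ⟨s, hsS, hsub x s hsU⟩
end

section
/- In a locally finite poset, if a directed set S has a supremum m = ⊔S with m ∉ S, then one derives a contradiction; equivalently, every directed set with a supremum contains its supremum as a maximal element of S. -/
theorem DirectedSetLe.directedOn {P : Type*} [PartialOrder P] {S : Set P}
    (hS : DirectedSetLe S) : DirectedOn (· ≤ ·) S :=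
  hS.2

theorem DirectedOn.isGreatest_of_maximal {α : Type*} [Preorder α] {S : Set α} {t : α}
    (hd : DirectedOn (· ≤ ·) S) (ht : Maximal (· ∈ S) t) : IsGreatest S t := by
  refine ⟨ht.prop, fun s hs => ?_⟩
  obtain ⟨u, hu, htu, hsu⟩ := hd t ht.prop s hs
  exact hsu.trans (ht.2 hu htu)

theorem Set.Nonempty.exists_maximal_of_bddAbove {α : Type*} [Preorder α]
    (hIcc : ∀ x y : α, (Set.Icc x y).Finite) {S : Set α} (hne : S.Nonempty) (hbdd : BddAbove S) :
    ∃ t, Maximal (· ∈ S) t := by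
  obtain ⟨s, hs⟩ := hne
  obtain ⟨m, hm⟩ := hbdd
  have hfin : (S ∩ Set.Icc s m).Finite := (hIcc s m).subset Set.inter_subset_right
  obtain ⟨t, hst, ht⟩ := hfin.exists_le_maximal ⟨hs, le_rfl, hm hs⟩
  exact ⟨t, ht.prop.1, fun u hu htu => ht.2 ⟨hu, hst.trans htu, hm hu⟩ htu⟩

theorem IsLUB.mem_of_directedOn {α : Type*} [PartialOrder α]
    (hIcc : ∀ x y : α, (Set.Icc x y).Finite) {S : Set α} {m : α} (hm : IsLUB S m)
    (hne : S.Nonempty) (hd : DirectedOn (· ≤ ·) S) : m ∈ S := by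
  obtain ⟨t, ht⟩ := hne.exists_maximal_of_bddAbove hIcc hm.bddAbove
  have htm : t = m := (hd.isGreatest_of_maximal ht).isLUB.unique hm
  exact htm ▸ ht.prop

/-- In a locally finite poset, a directed set with a supremum cannot omit its
supremum; equivalently it contains the supremum as a maximal element. -/
theorem directed_sup_mem_locallyFinite {P : Type*} [PartialOrder P]
    (hlf : ∀ x y : P, (Set.Icc x y).Finite)
    (S : Set P) (hS : DirectedSetLe S) (m : P) (hm : IsLUB S m) :
    (m ∉ S → False) ∧ (m ∈ S ∧ ∀ s ∈ S, m ≤ s → s = m) := by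
  have hmS : m ∈ S := hm.mem_of_directedOn hlf hS.1 hS.directedOn
  exact ⟨fun h => h hmS, hmS, fun s hs hms => le_antisymm (hm.1 hs) hms⟩
end
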